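/- arXiv:2103.01574 — 3 statements merged into one kernel-verified Lean document; each statement's English description precedes it below -/
import Mathlib

section
/- Let M ∈ 𝒮^n be symmetric with M_{11} = M_{12} = M_{22} = 1. If x is a strict local minimizer of min{y^T M y : y ∈ Δ_n}, then x_1 x_2 = 0. -/
open Matrix Finset
open scoped Classical

def IsStable {n : ℕ} (G : SimpleGraph (Fin n)) (S : Finset (Fin n)) : Prop :=
  ∀ i ∈ S, ∀ j ∈ S, ¬ G.Adj i j

noncomputable def alpha {n : ℕ} (G : SimpleGraph (Fin n)) : ℕ :=
  sSup {k | ∃ S : Finset (Fin n), IsStable G S ∧ S.card = k}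

noncomputable def indic {n : ℕ} (S : Finset (Fin n)) : Fin n → ℝ :=
  fun i => if i ∈ S then 1 else 0

noncomputable def qform {n : ℕ} (M : Matrix (Fin n) (Fin n) ℝ) (x : Fin n → ℝ) : ℝ :=
  x ⬝ᵥ M.mulVec x

noncomputable def fG {n : ℕ} (G : SimpleGraph (Fin n)) (x : Fin n → ℝ) : ℝ :=
  qform (1 + G.adjMatrix ℝ) x

noncomputable def globMin {n : ℕ} (f : (Fin n → ℝ) → ℝ) : Set (Fin n → ℝ) :=
  {x | x ∈ stdSimplex ℝ (Fin n) ∧ ∀ y ∈ stdSimplex ℝ (Fin n), f x ≤ f y}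

/-! For `v = e₀ - e₁` the conditions on `M` give `vᵀ M v = 0`, so `t ↦ (x + t v)ᵀ M (x + t v)`
is affine. If `x₀ x₁ ≠ 0` then `x ± t v` stays in the simplex for small `t > 0`, and the two values
average to the value at `x`, so `x` cannot be a strict local minimizer. -/

section Simplex

variable {ι : Type*} [DecidableEq ι]

theorem add_smul_single_sub_single_ne (x : ι → ℝ) {i j : ι} (hij : i ≠ j) {t : ℝ} (ht : t ≠ 0) :
    x + t • (Pi.single i 1 - Pi.single j 1) ≠ x := by
  intro h
  exact ht (by simpa [hij] using congrFun h i)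

variable [Fintype ι]

theorem add_smul_single_sub_single_mem_stdSimplex {x : ι → ℝ} (hx : x ∈ stdSimplex ℝ ι)
    {i j : ι} {t : ℝ} (hi : -x i ≤ t) (hj : t ≤ x j) :
    x + t • (Pi.single i 1 - Pi.single j 1) ∈ stdSimplex ℝ ι := by
  obtain ⟨hx_nonneg, hx_sum⟩ := hx
  refine ⟨fun k => ?_, ?_⟩
  · rcases eq_or_ne k i with rfl | hki <;> rcases eq_or_ne k j with rfl | hkj <;> simp [*]
    linarith
  · simp [Finset.sum_add_distrib, ← Finset.mul_sum, Finset.sum_sub_distrib, hx_sum]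

theorem dist_add_smul_single_sub_single_le (x : ι → ℝ) (i j : ι) (t : ℝ) :
    dist (x + t • (Pi.single i 1 - Pi.single j 1)) x ≤ |t| := by
  have hv : ‖(Pi.single i 1 - Pi.single j 1 : ι → ℝ)‖ ≤ 1 := by
    refine (pi_norm_le_iff_of_nonneg zero_le_one).2 fun k => ?_
    rcases eq_or_ne k i with rfl | hki <;> rcases eq_or_ne k j with rfl | hkj <;> simp [*]
  rw [dist_eq_norm, add_sub_cancel_left, norm_smul, Real.norm_eq_abs]
  exact mul_le_of_le_one_right (abs_nonneg t) hv

end Simplex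

section QuadraticForm

variable {n : ℕ} (M : Matrix (Fin n) (Fin n) ℝ)

theorem qform_add_smul (x v : Fin n → ℝ) (t : ℝ) :
    qform M (x + t • v) = qform M x + t * (x ⬝ᵥ M *ᵥ v + v ⬝ᵥ M *ᵥ x) + t ^ 2 * qform M v := by
  simp only [qform, mulVec_add, mulVec_smul, dotProduct_add, add_dotProduct, smul_dotProduct,
    dotProduct_smul, smul_eq_mul]
  ring

theorem qform_add_smul_add_qform_add_neg_smul {v : Fin n → ℝ} (hv : qform M v = 0)
    (x : Fin n → ℝ) (t : ℝ) :
    qform M (x + t • v) + qform M (x + (-t) • v) = 2 * qform M x := by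
  rw [qform_add_smul, qform_add_smul, hv]
  ring

theorem qform_single_sub_single {M : Matrix (Fin n) (Fin n) ℝ} (hM : M.IsSymm) (i j : Fin n) :
    qform M (Pi.single i 1 - Pi.single j 1) = M i i - 2 * M i j + M j j := by
  have hji : M j i = M i j := hM.apply i j
  simp only [qform, mulVec_sub, mulVec_single_one, dotProduct_sub, sub_dotProduct,
    single_one_dotProduct, col_apply, hji]
  ring

end QuadraticForm

theorem stmt_3 (n : ℕ) (M : Matrix (Fin (n+2)) (Fin (n+2)) ℝ) (hM : M.IsSymm)
    (h11 : M 0 0 = 1) (h12 : M 0 1 = 1) (h22 : M 1 1 = 1)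
    (x : Fin (n+2) → ℝ) (hx : x ∈ stdSimplex ℝ (Fin (n+2)))
    (hstrict : ∃ ε > 0, ∀ y ∈ stdSimplex ℝ (Fin (n+2)), y ≠ x → dist y x < ε →
      qform M x < qform M y) :
    x 0 * x 1 = 0 := by
  by_contra hprod
  obtain ⟨ε, hε, hmin⟩ := hstrict
  have hx0 : 0 < x 0 := (hx.1 0).lt_of_ne fun h => hprod (by rw [← h, zero_mul])
  have hx1 : 0 < x 1 := (hx.1 1).lt_of_ne fun h => hprod (by rw [← h, mul_zero])
  set t := min (min (x 0) (x 1)) (ε / 2)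
  have ht : 0 < t := by positivity
  have ht0 : t ≤ x 0 := (min_le_left _ _).trans (min_le_left _ _)
  have ht1 : t ≤ x 1 := (min_le_left _ _).trans (min_le_right _ _)
  have htε : t < ε := (min_le_right _ _).trans_lt (half_lt_self hε)
  have hv : qform M (Pi.single 0 1 - Pi.single 1 1) = 0 := by
    rw [qform_single_sub_single hM, h11, h12, h22]; norm_num
  have lt_qform (s : ℝ) (hs0 : -x 0 ≤ s) (hs1 : s ≤ x 1) (hs : s ≠ 0) (hsε : |s| < ε) :
      qform M x < qform M (x + s • (Pi.single 0 1 - Pi.single 1 1)) :=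
    hmin _ (add_smul_single_sub_single_mem_stdSimplex hx hs0 hs1)
      (add_smul_single_sub_single_ne x Fin.zero_ne_one hs)
      ((dist_add_smul_single_sub_single_le x 0 1 s).trans_lt hsε)
  have hplus := lt_qform t (by linarith) ht1 ht.ne' (by rwa [abs_of_pos ht])
  have hminus := lt_qform (-t) (by linarith) (by linarith) (neg_ne_zero.2 ht.ne')
    (by rwa [abs_neg, abs_of_pos ht])
  linarith [qform_add_smul_add_qform_add_neg_smul M hv x t]
end

section
/- Let G be a graph and x ∈ Δ_n with support S, and let C_1, …, C_k be the connected components of the induced subgraph G[S]. Then x is a global minimizer of f_G(y) = y^T(I + A_G)y over Δ_n if and only if k = α(G), each C_h is a clique of G, and Σ_{i ∈ C_h} x_i = 1/k for all h ∈ [k]. -/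
open Matrix Finset
open scoped Classical

/-
Motzkin–Straus. For a direction `d` with `x ± d` in the simplex, the parallelogram identity
`f (x + d) + f (x - d) = 2 f x + 2 f d` shows that at a minimizer `f d ≥ 0`, and that `x + d` is
again a minimizer when `f d = 0`. Along an edge `ij` the direction `eᵢ - eⱼ` has `f = 0`, so mass
can be shifted along edges until the support of a minimizer is stable; there `f x = ∑ xᵢ²
≥ 1 / |supp x| ≥ 1 / α`, and the uniform vector on a maximum stable set attains `1 / α`.
Along an induced path `a - b - c` the direction `eₐ + e_c - 2 e_b` has `f = -2`, so the support of
a minimizer has no induced path on three vertices and its connected components are cliques.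
For pairwise nonadjacent cliques `C₁, …, C_k` covering the support, with `s_h = ∑_{i ∈ C_h} xᵢ`,
`f x = ∑ s_h² = 1 / k + ∑ (s_h - 1 / k)²`, while `k ≤ α` by picking one vertex in each `C_h`.
Comparing with `min f = 1 / α` gives both directions.
-/

open Function

section Simplex

variable {ι : Type*} [Fintype ι]

theorem add_mem_stdSimplex {x d : ι → ℝ} (hx : x ∈ stdSimplex ℝ ι) (hd : ∑ i, d i = 0)
    (hle : ∀ i, |d i| ≤ x i) : x + d ∈ stdSimplex ℝ ι := by
  refine ⟨fun i => ?_, ?_⟩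
  · have := neg_abs_le (d i)
    simp only [Pi.add_apply]
    linarith [hle i]
  · simp only [Pi.add_apply, sum_add_distrib, hx.2, hd, add_zero]

theorem add_mem_and_sub_mem_stdSimplex {x d : ι → ℝ} (hx : x ∈ stdSimplex ℝ ι)
    (hd : ∑ i, d i = 0) (hle : ∀ i, |d i| ≤ x i) :
    x + d ∈ stdSimplex ℝ ι ∧ x - d ∈ stdSimplex ℝ ι := by
  refine ⟨add_mem_stdSimplex hx hd hle, ?_⟩
  rw [sub_eq_add_neg]
  exact add_mem_stdSimplex hx (by simp [hd]) (by simpa using hle)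

theorem exists_ne_zero_of_mem_stdSimplex {x : ι → ℝ} (hx : x ∈ stdSimplex ℝ ι) : ∃ i, x i ≠ 0 := by
  simpa using exists_ne_zero_of_sum_ne_zero (hx.2.trans_ne one_ne_zero)

end Simplex

section QuadraticForm

variable {n : ℕ} (M : Matrix (Fin n) (Fin n) ℝ)

theorem qform_add_add_qform_sub (x d : Fin n → ℝ) :
    qform M (x + d) + qform M (x - d) = 2 * qform M x + 2 * qform M d := by
  simp only [qform, mulVec_add, mulVec_sub, add_dotProduct, dotProduct_add, sub_dotProduct,
    dotProduct_sub]
  ring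

theorem qform_smul (t : ℝ) (d : Fin n → ℝ) :
    qform M (t • d) = t ^ 2 * qform M d := by
  simp only [qform, mulVec_smul, dotProduct_smul, smul_dotProduct, smul_eq_mul]
  ring

variable {M} {x d : Fin n → ℝ}

theorem qform_nonneg_of_mem_globMin (hx : x ∈ globMin (qform M))
    (hadd : x + d ∈ stdSimplex ℝ (Fin n)) (hsub : x - d ∈ stdSimplex ℝ (Fin n)) :
    0 ≤ qform M d := by
  have := qform_add_add_qform_sub M x d
  linarith [hx.2 _ hadd, hx.2 _ hsub]

theorem add_mem_globMin_of_qform_eq_zero (hx : x ∈ globMin (qform M))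
    (hadd : x + d ∈ stdSimplex ℝ (Fin n)) (hsub : x - d ∈ stdSimplex ℝ (Fin n))
    (hd : qform M d = 0) : x + d ∈ globMin (qform M) := by
  have := qform_add_add_qform_sub M x d
  refine ⟨hadd, fun y hy => ?_⟩
  linarith [hx.2 _ hy, hx.2 _ hsub]

end QuadraticForm

theorem SimpleGraph.Reachable.eq_or_adj_of_adj_trans {V : Type*} {H : SimpleGraph V}
    (htrans : ∀ a b c, H.Adj a b → H.Adj b c → a ≠ c → H.Adj a c) {u v : V}
    (huv : H.Reachable u v) : u = v ∨ H.Adj u v := by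
  obtain ⟨p⟩ := huv
  induction p with
  | nil => exact .inl rfl
  | @cons u w v hu _ ih =>
    rcases ih with rfl | hw
    · exact .inr hu
    · by_cases h : u = v
      · exact .inl h
      · exact .inr (htrans u w v hu hw h)

theorem SimpleGraph.isClique_of_connected_induce {V : Type*} {G : SimpleGraph V} {s : Set V}
    (hs : (G.induce s).Connected)
    (htrans : ∀ a ∈ s, ∀ b ∈ s, ∀ c ∈ s, G.Adj a b → G.Adj b c → a ≠ c → G.Adj a c) :
    G.IsClique s := by
  intro a ha b hb hab
  have := (hs.preconnected ⟨a, ha⟩ ⟨b, hb⟩).eq_or_adj_of_adj_trans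
    (fun (u v w : s) h₁ h₂ h₃ => htrans u u.2 v v.2 w w.2 h₁ h₂ (Subtype.coe_ne_coe.mpr h₃))
  simpa [hab] using this

theorem sum_eq_sum_sum_of_pairwiseDisjoint {α ι M : Type*} [Fintype α] [Fintype ι]
    [AddCommMonoid M] {C : ι → Finset α} (hdisj : Pairwise (Disjoint on C)) {f : α → M}
    (hf : ∀ a, f a ≠ 0 → ∃ h, a ∈ C h) : ∑ a, f a = ∑ h, ∑ a ∈ C h, f a := by
  rw [← sum_biUnion (hdisj.set_pairwise _)]
  refine (sum_subset (subset_univ _) fun a _ ha => ?_).symm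
  by_contra hfa
  obtain ⟨h, hh⟩ := hf a hfa
  exact ha (mem_biUnion.mpr ⟨h, mem_univ h, hh⟩)

theorem sum_sq_eq_inv_card_add_sum_sq_sub {ι : Type*} [Fintype ι] {s : ι → ℝ}
    (hs : ∑ i, s i = 1) :
    ∑ i, s i ^ 2 = 1 / Fintype.card ι + ∑ i, (s i - 1 / Fintype.card ι) ^ 2 := by
  simp only [sub_sq, sum_add_distrib, sum_sub_distrib, ← sum_mul, ← mul_sum, hs, sum_const,
    card_univ, nsmul_eq_mul]
  rcases eq_or_ne (Fintype.card ι : ℝ) 0 with h | h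
  · simp [h]
  · field_simp
    ring

theorem eq_and_forall_eq_of_one_div_add_sum_sq_le {k a : ℕ} {s : Fin k → ℝ} (hk : 0 < k)
    (hka : k ≤ a) (h : 1 / (k : ℝ) + ∑ i, (s i - 1 / k) ^ 2 ≤ 1 / a) :
    k = a ∧ ∀ i, s i = 1 / k := by
  have hk0 : (0 : ℝ) < k := Nat.cast_pos.mpr hk
  have ha0 : (0 : ℝ) < a := hk0.trans_le (Nat.cast_le.mpr hka)
  have hD : 0 ≤ ∑ i, (s i - 1 / k) ^ 2 := sum_nonneg fun _ _ => sq_nonneg _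
  have hinv : 1 / (a : ℝ) ≤ 1 / k := one_div_le_one_div_of_le hk0 (Nat.cast_le.mpr hka)
  refine ⟨le_antisymm hka (Nat.cast_le.mp ((one_div_le_one_div hk0 ha0).mp (by linarith))),
    fun i => ?_⟩
  have hi := (sum_eq_zero_iff_of_nonneg fun i _ => sq_nonneg (s i - 1 / k)).mp
    (by linarith) i (mem_univ i)
  exact sub_eq_zero.mp (pow_eq_zero_iff two_ne_zero |>.mp hi)

section Graph

variable {n : ℕ} (G : SimpleGraph (Fin n))

theorem fG_single_sub_single {i j : Fin n} (hij : G.Adj i j) :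
    fG G (Pi.single i 1 - Pi.single j 1) = 0 := by
  simp only [fG, qform, mulVec_sub, mulVec_single, sub_dotProduct, dotProduct_sub,
    single_dotProduct, one_mul]
  simp [one_apply, hij, hij.symm, hij.ne, hij.ne']

theorem fG_single_add_single_sub_single {a b c : Fin n} (hab : G.Adj a b) (hbc : G.Adj b c)
    (hac : ¬ G.Adj a c) (hne : a ≠ c) :
    fG G (Pi.single a 1 + Pi.single c 1 - Pi.single b 2) = -2 := by
  simp only [fG, qform, mulVec_sub, mulVec_add, mulVec_single, sub_dotProduct, add_dotProduct,
    dotProduct_sub, dotProduct_add, single_dotProduct, one_mul]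
  simp [one_apply, hab, hab.symm, hbc, hbc.symm, hac, hab.ne, hab.ne', hbc.ne, hbc.ne', hne,
    hne.symm, G.adj_comm c a]
  norm_num

theorem add_smul_single_sub_single_mem_globMin {z : Fin n → ℝ} (hz : z ∈ globMin (fG G))
    {i j : Fin n} (hij : G.Adj i j) (hji : z j ≤ z i) :
    z + z j • (Pi.single i 1 - Pi.single j 1) ∈ globMin (fG G) := by
  have hzj := hz.1.1 j
  have hfeas := add_mem_and_sub_mem_stdSimplex hz.1
    (d := z j • (Pi.single i 1 - Pi.single j 1)) (by simp [← mul_sum, sum_sub_distrib]) fun l => by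
      rcases eq_or_ne l i with rfl | hli
      · simp [hij.ne, abs_of_nonneg hzj, hji]
      rcases eq_or_ne l j with rfl | hlj
      · simp [hli, abs_of_nonneg hzj]
      · simp [hli, hlj, hz.1.1 l]
  refine add_mem_globMin_of_qform_eq_zero hz hfeas.1 hfeas.2 ?_
  rw [qform_smul]
  exact mul_eq_zero_of_right _ (fG_single_sub_single G hij)

theorem adj_of_mem_globMin {x : Fin n → ℝ} (hx : x ∈ globMin (fG G)) {a b c : Fin n}
    (ha : x a ≠ 0) (hb : x b ≠ 0) (hc : x c ≠ 0) (hab : G.Adj a b) (hbc : G.Adj b c)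
    (hne : a ≠ c) : G.Adj a c := by
  by_contra hac
  have hpos : ∀ l, x l ≠ 0 → 0 < x l := fun l hl => (hx.1.1 l).lt_of_ne' hl
  set t := min (min (x a) (x c)) (x b / 2)
  have ht : 0 < t := by have := hpos a ha; have := hpos b hb; have := hpos c hc; positivity
  have hta : t ≤ x a := (min_le_left _ _).trans (min_le_left _ _)
  have htc : t ≤ x c := (min_le_left _ _).trans (min_le_right _ _)
  have htb : t ≤ x b / 2 := min_le_right _ _
  have hfeas := add_mem_and_sub_mem_stdSimplex hx.1
    (d := t • (Pi.single a 1 + Pi.single c 1 - Pi.single b 2))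
    (by simp [← mul_sum, sum_add_distrib, sum_sub_distrib]; norm_num) fun l => by
      rcases eq_or_ne l a with rfl | hla
      · simp [hab.ne, hne, abs_of_pos ht, hta]
      rcases eq_or_ne l c with rfl | hlc
      · simp [hla, hbc.ne', abs_of_pos ht, htc]
      rcases eq_or_ne l b with rfl | hlb
      · simp [hla, hlc, abs_of_pos ht]; linarith
      · simp [hla, hlb, hlc, hx.1.1 l]
  have := qform_nonneg_of_mem_globMin hx hfeas.1 hfeas.2
  rw [qform_smul, show qform _ _ = fG G _ from rfl,
    fG_single_add_single_sub_single G hab hbc hac hne] at this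
  linarith [pow_pos ht 2]

theorem isClique_of_mem_globMin {x : Fin n → ℝ} (hx : x ∈ globMin (fG G)) {s : Set (Fin n)}
    (hs : (G.induce s).Connected) (hsupp : ∀ a ∈ s, x a ≠ 0) : G.IsClique s :=
  SimpleGraph.isClique_of_connected_induce hs fun a ha b hb c hc =>
    adj_of_mem_globMin G hx (hsupp a ha) (hsupp b hb) (hsupp c hc)

section Cliques

variable {ι : Type*} {x : Fin n → ℝ} {C : ι → Finset (Fin n)}

theorem one_add_adjMatrix_mulVec_apply_of_mem (hcover : ∀ i, x i ≠ 0 → ∃ h, i ∈ C h)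
    (hclique : ∀ h, G.IsClique (C h : Set (Fin n)))
    (hsep : ∀ h h', h ≠ h' → ∀ i ∈ C h, ∀ j ∈ C h', ¬ G.Adj i j) {h : ι} {i : Fin n}
    (hi : i ∈ C h) : ((1 + G.adjMatrix ℝ) *ᵥ x) i = ∑ j ∈ C h, x j := by
  have hentry : ∀ j, (1 + G.adjMatrix ℝ) i j * x j = if j ∈ C h then x j else 0 := by
    intro j
    by_cases hj : j ∈ C h
    · rcases eq_or_ne i j with rfl | hij
      · simp [hj, one_apply]
      · simp [hj, one_apply, hij, hclique h hi hj hij]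
    · rcases eq_or_ne (x j) 0 with hxj | hxj
      · simp [hj, hxj]
      obtain ⟨h', hj'⟩ := hcover j hxj
      have hhh : h ≠ h' := by rintro rfl; exact hj hj'
      have hij : i ≠ j := by rintro rfl; exact hj hi
      simp [hj, one_apply, hij, hsep h h' hhh i hi j hj']
  simp only [mulVec, dotProduct, hentry, sum_ite_mem, univ_inter]

theorem fG_eq_sum_sq_of_cliques [Fintype ι] (hcover : ∀ i, x i ≠ 0 → ∃ h, i ∈ C h)
    (hdisj : Pairwise (Disjoint on C)) (hclique : ∀ h, G.IsClique (C h : Set (Fin n)))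
    (hsep : ∀ h h', h ≠ h' → ∀ i ∈ C h, ∀ j ∈ C h', ¬ G.Adj i j) :
    fG G x = ∑ h, (∑ i ∈ C h, x i) ^ 2 := by
  calc fG G x = ∑ i, x i * ((1 + G.adjMatrix ℝ) *ᵥ x) i := rfl
    _ = ∑ h, ∑ i ∈ C h, x i * ((1 + G.adjMatrix ℝ) *ᵥ x) i :=
      sum_eq_sum_sum_of_pairwiseDisjoint hdisj fun i hi => hcover i (left_ne_zero_of_mul hi)
    _ = ∑ h, (∑ i ∈ C h, x i) ^ 2 := by
      refine sum_congr rfl fun h _ => ?_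
      rw [sq, sum_mul]
      exact sum_congr rfl fun i hi => by
        rw [one_add_adjMatrix_mulVec_apply_of_mem G hcover hclique hsep hi]

theorem fG_eq_inv_card_add_of_cliques [Fintype ι] (hx : x ∈ stdSimplex ℝ (Fin n))
    (hcover : ∀ i, x i ≠ 0 → ∃ h, i ∈ C h) (hdisj : Pairwise (Disjoint on C))
    (hclique : ∀ h, G.IsClique (C h : Set (Fin n)))
    (hsep : ∀ h h', h ≠ h' → ∀ i ∈ C h, ∀ j ∈ C h', ¬ G.Adj i j) :
    fG G x = 1 / Fintype.card ι + ∑ h, (∑ i ∈ C h, x i - 1 / Fintype.card ι) ^ 2 := by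
  rw [fG_eq_sum_sq_of_cliques G hcover hdisj hclique hsep]
  refine sum_sq_eq_inv_card_add_sum_sq_sub ?_
  rw [← sum_eq_sum_sum_of_pairwiseDisjoint hdisj hcover, hx.2]

end Cliques

theorem fG_eq_inv_card_add_of_isStable {x : Fin n → ℝ} (hx : x ∈ stdSimplex ℝ (Fin n))
    {T : Finset (Fin n)} (hT : IsStable G T) (hcover : ∀ i, x i ≠ 0 → i ∈ T) :
    fG G x = 1 / #T + ∑ i ∈ T, (x i - 1 / #T) ^ 2 := by
  have := fG_eq_inv_card_add_of_cliques G hx (C := fun i : T => {i.1})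
    (fun i hi => ⟨⟨i, hcover i hi⟩, mem_singleton_self i⟩)
    (fun i j hij => disjoint_singleton.mpr (Subtype.coe_ne_coe.mpr hij))
    (fun _ => by simp)
    (fun i j _ a ha b hb => by
      rw [mem_singleton] at ha hb; subst ha hb; exact hT _ i.2 _ j.2)
  simpa [sum_attach T fun i => (x i - (#T : ℝ)⁻¹) ^ 2] using this

theorem bddAbove_stable_card :
    BddAbove {k | ∃ S : Finset (Fin n), IsStable G S ∧ S.card = k} := by
  refine ⟨n, ?_⟩
  rintro _ ⟨S, -, rfl⟩
  simpa using card_le_univ S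

theorem card_le_alpha {T : Finset (Fin n)} (hT : IsStable G T) : #T ≤ alpha G :=
  le_csSup (bddAbove_stable_card G) ⟨T, hT, rfl⟩

theorem exists_isStable_card_eq_alpha : ∃ T : Finset (Fin n), IsStable G T ∧ #T = alpha G :=
  Nat.sSup_mem (s := {k | ∃ S : Finset (Fin n), IsStable G S ∧ S.card = k})
    ⟨0, ∅, by simp [IsStable]⟩ (bddAbove_stable_card G)

theorem card_le_alpha_of_pairwise_nonadj {ι : Type*} [Fintype ι] {C : ι → Finset (Fin n)}
    (hne : ∀ h, (C h).Nonempty) (hdisj : Pairwise (Disjoint on C))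
    (hsep : ∀ h h', h ≠ h' → ∀ i ∈ C h, ∀ j ∈ C h', ¬ G.Adj i j) :
    Fintype.card ι ≤ alpha G := by
  choose r hr using hne
  have hinj : Injective r := fun h h' hrr => by
    by_contra hhh
    exact disjoint_left.mp (hdisj hhh) (hr h) (hrr ▸ hr h')
  have hstable : IsStable G (univ.image r) := by
    simp only [IsStable, mem_image, mem_univ, true_and]
    rintro _ ⟨h, rfl⟩ _ ⟨h', rfl⟩
    rcases eq_or_ne h h' with rfl | hhh
    · exact G.irrefl
    · exact hsep h h' hhh _ (hr h) _ (hr h')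
  simpa [card_image_of_injective _ hinj] using card_le_alpha G hstable

theorem continuous_fG : Continuous (fG G) := by
  unfold fG qform
  fun_prop

theorem exists_mem_globMin {y : Fin n → ℝ} (hy : y ∈ stdSimplex ℝ (Fin n)) :
    ∃ z, z ∈ globMin (fG G) := by
  obtain ⟨z, hz, hmin⟩ :=
    (isCompact_stdSimplex ℝ (Fin n)).exists_isMinOn ⟨y, hy⟩ (continuous_fG G).continuousOn
  exact ⟨z, hz, fun w hw => hmin hw⟩

theorem one_div_alpha_le_fG_of_isStable {z : Fin n → ℝ} (hz : z ∈ stdSimplex ℝ (Fin n))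
    (hU : IsStable G {i | z i ≠ 0}) : 1 / (alpha G : ℝ) ≤ fG G z := by
  set U : Finset (Fin n) := {i | z i ≠ 0}
  have hUpos : (0 : ℝ) < #U := by
    obtain ⟨i, hi⟩ := exists_ne_zero_of_mem_stdSimplex hz
    exact Nat.cast_pos.mpr (card_pos.mpr ⟨i, by simpa [U] using hi⟩)
  calc 1 / (alpha G : ℝ) ≤ 1 / #U :=
        one_div_le_one_div_of_le hUpos (Nat.cast_le.mpr (card_le_alpha G hU))
    _ ≤ 1 / #U + ∑ i ∈ U, (z i - 1 / #U) ^ 2 :=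
        le_add_of_nonneg_right (sum_nonneg fun _ _ => sq_nonneg _)
    _ = fG G z := (fG_eq_inv_card_add_of_isStable G hz hU (by simp [U])).symm

theorem one_div_alpha_le_fG_of_mem_globMin {z : Fin n → ℝ} (hz : z ∈ globMin (fG G)) :
    1 / (alpha G : ℝ) ≤ fG G z := by
  induction hm : #{i | z i ≠ 0} using Nat.strong_induction_on generalizing z with
  | _ m ih =>
  by_cases hU : IsStable G {i | z i ≠ 0}
  · exact one_div_alpha_le_fG_of_isStable G hz.1 hU
  obtain ⟨i, hi, j, hj, hij⟩ : ∃ i, z i ≠ 0 ∧ ∃ j, z j ≠ 0 ∧ G.Adj i j := by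
    simpa [IsStable] using hU
  wlog hji : z j ≤ z i generalizing i j
  · exact this j hj i hi hij.symm (le_of_not_ge hji)
  set z' := z + z j • (Pi.single i 1 - Pi.single j 1)
  have hz' : z' ∈ globMin (fG G) := add_smul_single_sub_single_mem_globMin G hz hij hji
  have hsupp : ({l | z' l ≠ 0} : Finset (Fin n)) ⊆ ({l | z l ≠ 0} : Finset (Fin n)).erase j := by
    intro l hl
    simp only [mem_filter, mem_univ, true_and, mem_erase] at hl ⊢
    rcases eq_or_ne l j with rfl | hlj
    · simp [z', hij.ne] at hl
    rcases eq_or_ne l i with rfl | hli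
    · exact ⟨hlj, hi⟩
    · simpa [z', hli, hlj] using hl
  rw [← le_antisymm (hz'.2 _ hz.1) (hz.2 _ hz'.1)]
  exact ih _ (hm ▸ (card_le_card hsupp).trans_lt (card_erase_lt_of_mem (by simpa using hj))) hz' rfl

theorem one_div_alpha_le_fG {y : Fin n → ℝ} (hy : y ∈ stdSimplex ℝ (Fin n)) :
    1 / (alpha G : ℝ) ≤ fG G y := by
  obtain ⟨z, hz⟩ := exists_mem_globMin G hy
  exact (one_div_alpha_le_fG_of_mem_globMin G hz).trans (hz.2 y hy)

theorem smul_indic_mem_stdSimplex {T : Finset (Fin n)} (hT : T.Nonempty) :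
    (1 / #T : ℝ) • indic T ∈ stdSimplex ℝ (Fin n) := by
  refine ⟨fun i => by simp only [indic, Pi.smul_apply, smul_eq_mul]; positivity, ?_⟩
  have : (#T : ℝ) ≠ 0 := Nat.cast_ne_zero.mpr hT.card_pos.ne'
  simp [indic, this]

theorem fG_smul_indic_of_isStable {T : Finset (Fin n)} (hT : IsStable G T) (hne : T.Nonempty) :
    fG G ((1 / #T : ℝ) • indic T) = 1 / #T := by
  rw [fG_eq_inv_card_add_of_isStable G (smul_indic_mem_stdSimplex hne) hT
    (fun i hi => by by_contra h; simp [indic, h] at hi)]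
  simp +contextual [indic]

theorem fG_le_one_div_alpha_of_mem_globMin {x : Fin n → ℝ} (hx : x ∈ globMin (fG G)) :
    fG G x ≤ 1 / alpha G := by
  obtain ⟨T, hT, hTcard⟩ := exists_isStable_card_eq_alpha G
  have hne : T.Nonempty := by
    obtain ⟨i, -⟩ := exists_ne_zero_of_mem_stdSimplex hx.1
    have : 1 ≤ alpha G := by simpa using card_le_alpha G (T := {i}) (by simp [IsStable])
    exact card_pos.mp (by omega)
  rw [← hTcard, ← fG_smul_indic_of_isStable G hT hne]
  exact hx.2 _ (smul_indic_mem_stdSimplex hne)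

end Graph

theorem stmt_5 (n k : ℕ) (G : SimpleGraph (Fin n)) (x : Fin n → ℝ)
    (hx : x ∈ stdSimplex ℝ (Fin n)) (S : Finset (Fin n))
    (hsupp : ∀ i, i ∈ S ↔ x i ≠ 0)
    (C : Fin k → Finset (Fin n))
    (hne : ∀ h, (C h).Nonempty)
    (hcover : ∀ i, i ∈ S ↔ ∃ h, i ∈ C h)
    (hdisj : ∀ h h', h ≠ h' → Disjoint (C h) (C h'))
    (hconn : ∀ h, (G.induce (↑(C h) : Set (Fin n))).Connected)
    (hsep : ∀ h h', h ≠ h' → ∀ i ∈ C h, ∀ j ∈ C h', ¬ G.Adj i j) :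
    x ∈ globMin (fG G) ↔
      (k = alpha G ∧ (∀ h, G.IsClique (↑(C h) : Set (Fin n))) ∧
        ∀ h, ∑ i ∈ C h, x i = 1 / (k : ℝ)) := by
  have hcover' : ∀ i, x i ≠ 0 → ∃ h, i ∈ C h := fun i hi => (hcover i).1 ((hsupp i).2 hi)
  constructor
  · intro hmin
    have hclique : ∀ h, G.IsClique (C h : Set (Fin n)) := fun h =>
      isClique_of_mem_globMin G hmin (hconn h) fun a ha => (hsupp a).1 ((hcover a).2 ⟨h, ha⟩)
    have hk0 : 0 < k := by
      obtain ⟨i, hi⟩ := exists_ne_zero_of_mem_stdSimplex hx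
      obtain ⟨h, -⟩ := hcover' i hi
      exact h.pos
    have hk : k ≤ alpha G := by simpa using card_le_alpha_of_pairwise_nonadj G hne hdisj hsep
    have hval := fG_eq_inv_card_add_of_cliques G hx hcover' hdisj hclique hsep
    rw [Fintype.card_fin] at hval
    obtain ⟨hkα, hw⟩ := eq_and_forall_eq_of_one_div_add_sum_sq_le hk0 hk
      (hval ▸ fG_le_one_div_alpha_of_mem_globMin G hmin)
    exact ⟨hkα, hclique, hw⟩
  · rintro ⟨hkα, hclique, hw⟩
    refine ⟨hx, fun y hy => ?_⟩
    rw [fG_eq_inv_card_add_of_cliques G hx hcover' hdisj hclique hsep]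
    simpa [hw, ← hkα] using one_div_alpha_le_fG G hy
end

section
/- Let G be a graph and S a stable set. For i ∈ S let N_1(i) = {j ∈ V \ S : N_S(j) = {i}} be the set of vertices whose only neighbor in S is i. Then χ^S/|S| is a local minimizer of f_G over Δ_n if and only if S is a maximal stable set and N_1(i) is a clique for every i ∈ S. -/
/-
At `x = χ^S / |S|` one has `(I + A) x = (χ^S + |N_S(·)|) / |S|`. If some `j ∉ S` has no
neighbour in `S`, moving mass from a vertex of `S` to `j` decreases `f_G` to first order. If
`j, k ∈ N_1(i)` are not adjacent, the direction `e_j + e_k - 2 e_i` has vanishing first-order term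
and curvature `-2`.

Conversely, near `x` every coordinate on `S` exceeds `1 / (2|S|)`. By maximality the vertices split
into the blocks `{i} ∪ N_1(i)`, which are cliques, and the set `D` of vertices with at least two
neighbours in `S`. Reading `f_G(y) = ∑ y_v ((I + A) y)_v` row by row gives
`f_G(y) ≥ ∑_i P_i² + 2 ∑_{j ∈ D} y_j ∑_{i ∈ N_S(j)} y_i`, where `P_i` is the mass of block `i`,
and the inner sums are at least `1 / |S|`. With `u = ∑_{j ∈ D} y_j`, Cauchy–Schwarz on
`∑ P_i = 1 - u` yields `f_G(y) ≥ ((1 - u)² + 2u) / |S| ≥ 1 / |S| = f_G(x)`.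
-/

open Matrix Finset
open scoped Classical

open Filter Topology

section SecondOrder

variable {ι : Type*} [Fintype ι]

lemma Matrix.IsSymm.dotProduct_mulVec_comm {R : Type*} [CommSemiring R] {M : Matrix ι ι R}
    (hM : M.IsSymm) (u v : ι → R) :
    u ⬝ᵥ M *ᵥ v = M *ᵥ u ⬝ᵥ v := by
  rw [dotProduct_mulVec, ← mulVec_transpose, hM.eq]

lemma Matrix.IsSymm.add_smul_dotProduct_mulVec {R : Type*} [CommSemiring R] {M : Matrix ι ι R}
    (hM : M.IsSymm) (x d : ι → R) (ε : R) :
    (x + ε • d) ⬝ᵥ M *ᵥ (x + ε • d) =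
      x ⬝ᵥ M *ᵥ x + 2 * (M *ᵥ x ⬝ᵥ d) * ε + (d ⬝ᵥ M *ᵥ d) * ε ^ 2 := by
  simp only [mulVec_add, mulVec_smul, dotProduct_add, add_dotProduct, dotProduct_smul,
    smul_dotProduct, smul_eq_mul]
  rw [hM.dotProduct_mulVec_comm x d, dotProduct_comm d (M *ᵥ x)]
  ring

lemma IsLocalMinOn.eventually_le_add_smul {E : Type*} [TopologicalSpace E] [AddCommGroup E]
    [Module ℝ E] [ContinuousAdd E] [ContinuousSMul ℝ E] {f : E → ℝ} {s : Set E} {x d : E}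
    (h : IsLocalMinOn f s x) (hd : ∀ᶠ ε in 𝓝[>] (0 : ℝ), x + ε • d ∈ s) :
    ∀ᶠ ε in 𝓝[>] (0 : ℝ), f x ≤ f (x + ε • d) := by
  have hline : Tendsto (fun ε : ℝ => x + ε • d) (𝓝 0) (𝓝 x) := by
    simpa using ((continuous_id.smul continuous_const).const_add x).tendsto (0 : ℝ)
  exact (tendsto_nhdsWithin_iff.2 ⟨hline.mono_left nhdsWithin_le_nhds, hd⟩).eventually h

lemma nonneg_of_eventually_nonneg_quadratic {a b : ℝ}
    (h : ∀ᶠ ε in 𝓝[>] (0 : ℝ), 0 ≤ a * ε + b * ε ^ 2) : 0 ≤ a ∧ (a = 0 → 0 ≤ b) := by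
  constructor
  · have hlim : Tendsto (fun ε => a + b * ε) (𝓝[>] 0) (𝓝 a) := by
      have hcont : Continuous fun ε : ℝ => a + b * ε := by fun_prop
      simpa using (hcont.tendsto 0).mono_left nhdsWithin_le_nhds
    refine ge_of_tendsto hlim ?_
    filter_upwards [h, self_mem_nhdsWithin] with ε hε (hε0 : 0 < ε)
    nlinarith
  · rintro rfl
    obtain ⟨ε, hε, hε0 : 0 < ε⟩ := (h.and self_mem_nhdsWithin).exists
    nlinarith [pow_pos hε0 2]

lemma eventually_add_smul_mem_stdSimplex {x d : ι → ℝ} (hx : x ∈ stdSimplex ℝ ι)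
    (hd : ∑ i, d i = 0) (hpos : ∀ i, x i = 0 → 0 ≤ d i) :
    ∀ᶠ ε in 𝓝[>] (0 : ℝ), x + ε • d ∈ stdSimplex ℝ ι := by
  have hcoord : ∀ i, ∀ᶠ ε in 𝓝[>] (0 : ℝ), 0 ≤ x i + ε * d i := by
    intro i
    rcases (hx.1 i).eq_or_lt with h0 | h0
    · filter_upwards [self_mem_nhdsWithin] with ε (hε : 0 < ε)
      rw [← h0, zero_add]
      exact mul_nonneg hε.le (hpos i h0.symm)
    · have hlim : Tendsto (fun ε => x i + ε * d i) (𝓝[>] 0) (𝓝 (x i)) := by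
        have hcont : Continuous fun ε : ℝ => x i + ε * d i := by fun_prop
        simpa using (hcont.tendsto 0).mono_left nhdsWithin_le_nhds
      exact hlim.eventually (le_mem_nhds h0)
  filter_upwards [eventually_all.2 hcoord] with ε hε
  refine ⟨hε, ?_⟩
  simp [sum_add_distrib, ← mul_sum, hx.2, hd]

theorem IsLocalMinOn.secondOrder_stdSimplex {M : Matrix ι ι ℝ} (hM : M.IsSymm) {x d : ι → ℝ}
    (h : IsLocalMinOn (fun y => y ⬝ᵥ M *ᵥ y) (stdSimplex ℝ ι) x) (hx : x ∈ stdSimplex ℝ ι)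
    (hd : ∑ i, d i = 0) (hpos : ∀ i, x i = 0 → 0 ≤ d i) :
    0 ≤ M *ᵥ x ⬝ᵥ d ∧ (M *ᵥ x ⬝ᵥ d = 0 → 0 ≤ d ⬝ᵥ M *ᵥ d) := by
  have hquad := (h.eventually_le_add_smul (eventually_add_smul_mem_stdSimplex hx hd hpos)).mono
    fun ε hε => by rwa [hM.add_smul_dotProduct_mulVec, add_assoc, le_add_iff_nonneg_right] at hε
  obtain ⟨h₁, h₂⟩ := nonneg_of_eventually_nonneg_quadratic hquad
  exact ⟨by linarith, fun h0 => h₂ (by rw [h0, mul_zero])⟩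

end SecondOrder

section Neighbors

variable {V : Type*} [Fintype V] [DecidableEq V] (G : SimpleGraph V) (S : Finset V)

noncomputable def neighborsIn (j : V) : Finset V := S.filter (G.Adj · j)

noncomputable def privateNeighbors (i : V) : Finset V := Sᶜ.filter (neighborsIn G S · = {i})

noncomputable def multiplyDominated : Finset V := Sᶜ.filter (fun j => 1 < #(neighborsIn G S j))

variable {G S}

lemma coe_privateNeighbors (i : V) :
    (privateNeighbors G S i : Set V) = {j | j ∉ S ∧ S.filter (fun s => G.Adj s j) = {i}} := by
  ext j
  rw [SetLike.mem_coe, privateNeighbors, mem_filter, mem_compl]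
  rfl

lemma neighborsIn_eq_of_mem_privateNeighbors {i j : V} (hj : j ∈ privateNeighbors G S i) :
    neighborsIn G S j = {i} :=
  (mem_filter.1 hj).2

lemma adj_of_mem_privateNeighbors {i j : V} (hj : j ∈ privateNeighbors G S i) : G.Adj i j := by
  have hi : i ∈ neighborsIn G S j := by
    rw [neighborsIn_eq_of_mem_privateNeighbors hj]
    exact mem_singleton_self i
  exact (mem_filter.1 hi).2

lemma notMem_of_mem_privateNeighbors {i j : V} (hj : j ∈ privateNeighbors G S i) : j ∉ S :=
  mem_compl.1 (mem_filter.1 hj).1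

lemma sum_univ_eq_sum_privateNeighbors_add_sum_multiplyDominated
    (hmax : ∀ j ∉ S, ∃ i ∈ S, G.Adj i j) (F : V → ℝ) :
    ∑ v, F v = ∑ i ∈ S, (F i + ∑ j ∈ privateNeighbors G S i, F j) +
      ∑ j ∈ multiplyDominated G S, F j := by
  have hsingle :
      Sᶜ.filter (fun j => ¬ 1 < #(neighborsIn G S j)) = S.biUnion (privateNeighbors G S) := by
    ext j
    simp only [mem_filter, mem_biUnion, privateNeighbors, mem_compl, not_lt]
    constructor
    · rintro ⟨hj, hcard⟩
      obtain ⟨i, hi, hij⟩ := hmax j hj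
      have hiN : i ∈ neighborsIn G S j := mem_filter.2 ⟨hi, hij⟩
      exact ⟨i, hi, hj,
        eq_singleton_iff_unique_mem.2 ⟨hiN, fun k hk => card_le_one.1 hcard k hk i hiN⟩⟩
    · rintro ⟨i, -, hj, hN⟩
      exact ⟨hj, by simp [hN]⟩
  have hdisj : (S : Set V).PairwiseDisjoint (privateNeighbors G S) := by
    intro a _ b _ hab
    refine disjoint_left.2 fun j hja hjb => hab ?_
    exact singleton_injective ((mem_filter.1 hja).2.symm.trans (mem_filter.1 hjb).2)
  rw [← sum_add_sum_compl S, ← sum_filter_not_add_sum_filter Sᶜ (fun j => 1 < #(neighborsIn G S j)),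
    hsingle, sum_biUnion hdisj, ← add_assoc, ← sum_add_distrib]
  rfl

end Neighbors

section LowerBound

variable {V : Type*} [Fintype V] {G : SimpleGraph V} {S : Finset V} {y : V → ℝ}

lemma sum_le_adjMatrix_mulVec_apply (hy : ∀ v, 0 ≤ y v) {v : V} {T : Finset V}
    (hT : ∀ w ∈ T, G.Adj v w) : ∑ w ∈ T, y w ≤ (G.adjMatrix ℝ *ᵥ y) v := by
  rw [SimpleGraph.adjMatrix_mulVec_apply]
  exact sum_le_sum_of_subset_of_nonneg (fun w hw => by simpa using hT w hw)
    fun w _ _ => hy w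

lemma sum_neighborsIn_le_adjMatrix_mulVec_apply (hy : ∀ v, 0 ≤ y v) (j : V) :
    ∑ i ∈ neighborsIn G S j, y i ≤ (G.adjMatrix ℝ *ᵥ y) j :=
  sum_le_adjMatrix_mulVec_apply hy fun _ hi => (mem_filter.1 hi).2.symm

variable [DecidableEq V]

lemma sum_privateNeighbors_add_sum_le_adjMatrix_mulVec_apply (hy : ∀ v, 0 ≤ y v) (i : V) :
    ∑ j ∈ privateNeighbors G S i, y j + ∑ j ∈ (multiplyDominated G S).filter (G.Adj i), y j ≤
      (G.adjMatrix ℝ *ᵥ y) i := by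
  have hdisj : Disjoint (privateNeighbors G S i) ((multiplyDominated G S).filter (G.Adj i)) := by
    refine disjoint_left.2 fun j hj hj' => ?_
    have hcard := (mem_filter.1 (mem_filter.1 hj').1).2
    rw [(mem_filter.1 hj).2, card_singleton] at hcard
    exact lt_irrefl 1 hcard
  rw [← sum_union hdisj]
  refine sum_le_adjMatrix_mulVec_apply hy fun j hj => ?_
  rcases mem_union.1 hj with hj | hj
  exacts [adj_of_mem_privateNeighbors hj, (mem_filter.1 hj).2]

lemma add_sum_privateNeighbors_le_adjMatrix_mulVec_apply (hy : ∀ v, 0 ≤ y v) {i j : V}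
    (hclique : G.IsClique (privateNeighbors G S i : Set V)) (hj : j ∈ privateNeighbors G S i) :
    y i + ∑ k ∈ privateNeighbors G S i, y k ≤ y j + (G.adjMatrix ℝ *ᵥ y) j := by
  have hi : i ∉ (privateNeighbors G S i).erase j :=
    fun hi => G.irrefl (adj_of_mem_privateNeighbors (mem_of_mem_erase hi))
  have hT : ∑ k ∈ insert i ((privateNeighbors G S i).erase j), y k ≤ (G.adjMatrix ℝ *ᵥ y) j := by
    refine sum_le_adjMatrix_mulVec_apply hy fun k hk => ?_
    rcases mem_insert.1 hk with rfl | hk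
    · exact (adj_of_mem_privateNeighbors hj).symm
    · exact hclique hj (mem_of_mem_erase hk) (ne_of_mem_erase hk).symm
  rw [sum_insert hi] at hT
  linarith [add_sum_erase _ y hj]

lemma two_mul_le_sum_neighborsIn (hy : ∀ v, 0 ≤ y v) {m : ℝ} (hyS : ∀ i ∈ S, m ≤ y i) {j : V}
    (hj : j ∈ multiplyDominated G S) : 2 * m ≤ ∑ i ∈ neighborsIn G S j, y i := by
  obtain ⟨a, ha, b, hb, hab⟩ := one_lt_card.1 (mem_filter.1 hj).2
  have hpair : y a + y b ≤ ∑ i ∈ neighborsIn G S j, y i := by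
    rw [← sum_pair hab]
    exact sum_le_sum_of_subset_of_nonneg (insert_subset ha (singleton_subset_iff.2 hb))
      fun v _ _ => hy v
  linarith [hyS a (mem_filter.1 ha).1, hyS b (mem_filter.1 hb).1]

lemma one_add_adjMatrix_mulVec_apply (y : V → ℝ) (v : V) :
    ((1 + G.adjMatrix ℝ) *ᵥ y) v = y v + (G.adjMatrix ℝ *ᵥ y) v := by
  simp [add_mulVec]

lemma sq_add_mul_le_of_isClique (hy : ∀ v, 0 ≤ y v) {i : V}
    (hclique : G.IsClique (privateNeighbors G S i : Set V)) :
    (y i + ∑ j ∈ privateNeighbors G S i, y j) ^ 2 +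
        y i * ∑ j ∈ (multiplyDominated G S).filter (G.Adj i), y j ≤
      y i * ((1 + G.adjMatrix ℝ) *ᵥ y) i +
        ∑ j ∈ privateNeighbors G S i, y j * ((1 + G.adjMatrix ℝ) *ᵥ y) j := by
  have hrow : y i * (y i + ∑ j ∈ privateNeighbors G S i, y j +
      ∑ j ∈ (multiplyDominated G S).filter (G.Adj i), y j) ≤
        y i * ((1 + G.adjMatrix ℝ) *ᵥ y) i := by
    rw [one_add_adjMatrix_mulVec_apply, add_assoc]
    exact mul_le_mul_of_nonneg_left
      (add_le_add le_rfl (sum_privateNeighbors_add_sum_le_adjMatrix_mulVec_apply hy i)) (hy i)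
  have hcol : (∑ j ∈ privateNeighbors G S i, y j) * (y i + ∑ j ∈ privateNeighbors G S i, y j) ≤
      ∑ j ∈ privateNeighbors G S i, y j * ((1 + G.adjMatrix ℝ) *ᵥ y) j := by
    rw [sum_mul]
    refine sum_le_sum fun j hj => ?_
    rw [one_add_adjMatrix_mulVec_apply]
    exact mul_le_mul_of_nonneg_left
      (add_sum_privateNeighbors_le_adjMatrix_mulVec_apply hy hclique hj) (hy j)
  nlinarith

lemma sum_mul_sum_adj_eq_sum_mul_sum_neighborsIn (y : V → ℝ) :
    ∑ i ∈ S, y i * ∑ j ∈ (multiplyDominated G S).filter (G.Adj i), y j =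
      ∑ j ∈ multiplyDominated G S, y j * ∑ i ∈ neighborsIn G S j, y i := by
  simp only [mul_sum]
  rw [sum_comm' (t' := multiplyDominated G S) (s' := neighborsIn G S) fun i j => by
    simp only [neighborsIn, mem_filter]
    tauto]
  simp only [mul_comm]

theorem inv_card_le_dotProduct_mulVec (hmax : ∀ j ∉ S, ∃ i ∈ S, G.Adj i j)
    (hclique : ∀ i ∈ S, G.IsClique (privateNeighbors G S i : Set V)) (hy : y ∈ stdSimplex ℝ V)
    (hyS : ∀ i ∈ S, (#S : ℝ)⁻¹ / 2 ≤ y i) :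
    (#S : ℝ)⁻¹ ≤ y ⬝ᵥ (1 + G.adjMatrix ℝ) *ᵥ y := by
  set c : ℝ := (#S : ℝ)⁻¹
  set g : V → ℝ := (1 + G.adjMatrix ℝ) *ᵥ y
  set P : V → ℝ := fun i => y i + ∑ j ∈ privateNeighbors G S i, y j
  set s : V → ℝ := fun j => ∑ i ∈ neighborsIn G S j, y i
  set u : ℝ := ∑ j ∈ multiplyDominated G S, y j
  have hy0 := hy.1
  have hshared : ∀ j ∈ multiplyDominated G S, y j * s j ≤ y j * g j := fun j _ => by
    have hsj : s j ≤ (G.adjMatrix ℝ *ᵥ y) j := sum_neighborsIn_le_adjMatrix_mulVec_apply hy0 j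
    have hgj : g j = y j + (G.adjMatrix ℝ *ᵥ y) j := one_add_adjMatrix_mulVec_apply y j
    rw [hgj]
    exact mul_le_mul_of_nonneg_left (by linarith [hy0 j]) (hy0 j)
  have hs : ∀ j ∈ multiplyDominated G S, c * y j ≤ y j * s j := fun j hj => by
    have := two_mul_le_sum_neighborsIn hy0 hyS hj
    nlinarith [hy0 j]
  have hmass : ∑ i ∈ S, P i + u = 1 := by
    rw [← hy.2, sum_univ_eq_sum_privateNeighbors_add_sum_multiplyDominated hmax]
  have hCS : c * (1 - u) ^ 2 ≤ ∑ i ∈ S, P i ^ 2 := by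
    have := pow_sum_div_card_le_sum_pow (s := S) (f := P)
      (fun i _ => add_nonneg (hy0 i) (sum_nonneg fun j _ => hy0 j)) 1
    rw [← eq_sub_of_add_eq hmass]
    simpa [div_eq_inv_mul] using this
  have hc : 0 ≤ c := by positivity
  calc c ≤ c * (1 - u) ^ 2 + 2 * ∑ j ∈ multiplyDominated G S, c * y j := by
        rw [← mul_sum]
        nlinarith [mul_nonneg hc (sq_nonneg u)]
    _ ≤ ∑ i ∈ S, P i ^ 2 + 2 * ∑ j ∈ multiplyDominated G S, y j * s j :=
        add_le_add hCS (mul_le_mul_of_nonneg_left (sum_le_sum hs) zero_le_two)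
    _ = ∑ i ∈ S, (P i ^ 2 + y i * ∑ j ∈ (multiplyDominated G S).filter (G.Adj i), y j) +
          ∑ j ∈ multiplyDominated G S, y j * s j := by
        rw [sum_add_distrib, sum_mul_sum_adj_eq_sum_mul_sum_neighborsIn]
        ring
    _ ≤ ∑ i ∈ S, (y i * g i + ∑ j ∈ privateNeighbors G S i, y j * g j) +
          ∑ j ∈ multiplyDominated G S, y j * g j :=
        add_le_add (sum_le_sum fun i hi => sq_add_mul_le_of_isClique hy0 (hclique i hi))
          (sum_le_sum hshared)
    _ = y ⬝ᵥ g := (sum_univ_eq_sum_privateNeighbors_add_sum_multiplyDominated hmax _).symm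

end LowerBound

section CharacteristicVector

variable {n : ℕ} {G : SimpleGraph (Fin n)} {S : Finset (Fin n)}

lemma one_add_adjMatrix_mulVec_indic (G : SimpleGraph (Fin n)) (S : Finset (Fin n)) :
    (1 + G.adjMatrix ℝ) *ᵥ indic S = fun a => indic S a + #(neighborsIn G S a) := by
  ext a
  simp only [add_mulVec, one_mulVec, Pi.add_apply, SimpleGraph.adjMatrix_mulVec_apply, indic,
    sum_boole, neighborsIn]
  congr 3
  ext x
  simp [G.adj_comm, and_comm]

lemma smul_indic_apply_eq_zero (hSne : S.Nonempty) {v : Fin n} :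
    ((#S : ℝ)⁻¹ • indic S) v = 0 ↔ v ∉ S := by
  simp [indic, hSne.ne_empty]

lemma smul_indic_mem_stdSimplex_s10 (hSne : S.Nonempty) :
    (#S : ℝ)⁻¹ • indic S ∈ stdSimplex ℝ (Fin n) := by
  refine ⟨fun v => ?_, ?_⟩
  · simp only [Pi.smul_apply, indic, smul_eq_mul]
    positivity
  · simp [indic, hSne.ne_empty]

lemma fG_smul_indic (hS : IsStable G S) : fG G ((#S : ℝ)⁻¹ • indic S) = (#S : ℝ)⁻¹ := by
  have hN : ∀ a ∈ S, neighborsIn G S a = ∅ :=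
    fun a ha => filter_eq_empty_iff.2 fun s hs => hS s hs a ha
  have hdot : indic S ⬝ᵥ (fun a => indic S a + #(neighborsIn G S a)) = #S := by
    simp only [dotProduct, indic, ite_mul, one_mul, zero_mul, sum_ite_mem, univ_inter]
    rw [sum_congr rfl fun a ha => by rw [if_pos ha, hN a ha, card_empty, Nat.cast_zero, add_zero]]
    simp
  simp only [fG, qform, mulVec_smul, one_add_adjMatrix_mulVec_indic, smul_dotProduct,
    dotProduct_smul, hdot, smul_eq_mul]
  rw [← mul_assoc]
  simpa using mul_self_mul_inv (#S : ℝ)⁻¹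

end CharacteristicVector

section Necessity

variable {n : ℕ} {G : SimpleGraph (Fin n)} {S : Finset (Fin n)}

lemma exists_adj_of_isLocalMinOn (hSne : S.Nonempty)
    (h : IsLocalMinOn (fG G) (stdSimplex ℝ (Fin n)) ((#S : ℝ)⁻¹ • indic S)) :
    ∀ j ∉ S, ∃ i ∈ S, G.Adj i j := by
  intro j hj
  by_contra! hisolated
  obtain ⟨i, hi⟩ := hSne
  have hN : neighborsIn G S j = ∅ := filter_eq_empty_iff.2 fun s hs => hisolated s hs
  obtain ⟨hfirst, -⟩ := h.secondOrder_stdSimplex (d := Pi.single j 1 - Pi.single i 1)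
    (isSymm_one.add G.isSymm_adjMatrix) (smul_indic_mem_stdSimplex_s10 ⟨i, hi⟩)
    (by simp [sum_sub_distrib]) fun v hv => by
      have hvi : v ≠ i := fun h => (smul_indic_apply_eq_zero ⟨i, hi⟩).1 hv (h ▸ hi)
      simp only [Pi.sub_apply, Pi.single_apply, hvi, if_false, sub_zero]
      split_ifs <;> norm_num
  have hgrad : (1 + G.adjMatrix ℝ) *ᵥ ((#S : ℝ)⁻¹ • indic S) ⬝ᵥ (Pi.single j 1 - Pi.single i 1) =
      -((#S : ℝ)⁻¹ * (1 + #(neighborsIn G S i))) := by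
    simp [mulVec_smul, one_add_adjMatrix_mulVec_indic, dotProduct_sub, indic, hj, hi, hN]
  have hc : (0 : ℝ) < (#S : ℝ)⁻¹ := inv_pos.2 (Nat.cast_pos.2 (card_pos.2 ⟨i, hi⟩))
  rw [hgrad, neg_nonneg] at hfirst
  exact hfirst.not_gt (mul_pos hc (by positivity))

lemma isClique_privateNeighbors_of_isLocalMinOn (hS : IsStable G S)
    (h : IsLocalMinOn (fG G) (stdSimplex ℝ (Fin n)) ((#S : ℝ)⁻¹ • indic S)) {i : Fin n}
    (hi : i ∈ S) : G.IsClique (privateNeighbors G S i : Set (Fin n)) := by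
  intro j hj k hk hjk
  by_contra hjk'
  have hij := adj_of_mem_privateNeighbors hj
  have hik := adj_of_mem_privateNeighbors hk
  have hNi : neighborsIn G S i = ∅ := filter_eq_empty_iff.2 fun s hs => hS s hs i hi
  obtain ⟨-, hsecond⟩ := h.secondOrder_stdSimplex
    (d := Pi.single j 1 + Pi.single k 1 - Pi.single i 2)
    (isSymm_one.add G.isSymm_adjMatrix) (smul_indic_mem_stdSimplex_s10 ⟨i, hi⟩)
    (by norm_num [sum_add_distrib, sum_sub_distrib]) fun v hv => by
      have hvi : v ≠ i := fun h => (smul_indic_apply_eq_zero ⟨i, hi⟩).1 hv (h ▸ hi)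
      simp only [Pi.add_apply, Pi.sub_apply, Pi.single_apply, hvi, if_false, sub_zero]
      split_ifs <;> norm_num
  have hzero : (1 + G.adjMatrix ℝ) *ᵥ ((#S : ℝ)⁻¹ • indic S) ⬝ᵥ
      (Pi.single j 1 + Pi.single k 1 - Pi.single i 2) = 0 := by
    norm_num [mulVec_smul, one_add_adjMatrix_mulVec_indic, dotProduct_sub, dotProduct_add, indic,
      hi, hNi, notMem_of_mem_privateNeighbors hj, notMem_of_mem_privateNeighbors hk,
      neighborsIn_eq_of_mem_privateNeighbors hj, neighborsIn_eq_of_mem_privateNeighbors hk, mul_two]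
  have hcurv := hsecond hzero
  norm_num [mulVec_add, mulVec_sub, dotProduct_add, dotProduct_sub, add_dotProduct, sub_dotProduct,
    one_apply, hij.ne, hij.ne', hik.ne, hik.ne', hjk, hjk.symm, hij, hik, hij.symm, hik.symm,
    hjk', G.adj_comm k j] at hcurv

end Necessity

theorem stmt_10 (n : ℕ) (G : SimpleGraph (Fin n)) (S : Finset (Fin n))
    (hS : IsStable G S) (hSne : S.Nonempty) :
    IsLocalMinOn (fG G) (stdSimplex ℝ (Fin n)) ((S.card : ℝ)⁻¹ • indic S) ↔
      ((∀ j ∉ S, ∃ i ∈ S, G.Adj i j) ∧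
        ∀ i ∈ S, G.IsClique {j | j ∉ S ∧ S.filter (fun s => G.Adj s j) = {i}}) := by
  simp_rw [← coe_privateNeighbors]
  refine ⟨fun h => ⟨exists_adj_of_isLocalMinOn hSne h,
    fun i hi => isClique_privateNeighbors_of_isLocalMinOn hS h hi⟩, fun ⟨hmax, hclique⟩ => ?_⟩
  have hnear : ∀ᶠ y in 𝓝 ((#S : ℝ)⁻¹ • indic S), ∀ i ∈ S, (#S : ℝ)⁻¹ / 2 ≤ y i := by
    refine (eventually_all_finset S).2 fun i hi => ?_
    have hc : (0 : ℝ) < (#S : ℝ)⁻¹ := inv_pos.2 (Nat.cast_pos.2 (card_pos.2 hSne))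
    refine ((continuous_apply i).tendsto _).eventually (le_mem_nhds ?_)
    simp only [Pi.smul_apply, indic, if_pos hi, smul_eq_mul, mul_one]
    linarith
  filter_upwards [nhdsWithin_le_nhds hnear, self_mem_nhdsWithin] with y hyS hy
  rw [fG_smul_indic hS]
  exact inv_card_le_dotProduct_mulVec hmax hclique hy hyS
end
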